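/- (Test-count bound for binary-splitting group testing: O(k log n)) Let n ≥ 1 be a natural number and let D ⊆ Finset.range n be a finset. Then the number of pairs (i, j) with i ∈ Finset.range (Nat.clog 2 n + 1) and j ∈ Finset.range n such that the dyadic interval Finset.Ico (j * 2^i) ((j + 1) * 2^i) has nonempty intersection with D is at most D.card * (Nat.clog 2 n + 1). -/

import Mathlib

/-! Each point `d ∈ D` lies in exactly one interval `Ico (j * w) ((j + 1) * w)` of a given width
`w`, namely the one with `j = d / w`. Hence at each level the meeting intervals are indexed by
a subset of `D`, and summing over the levels gives the bound. -/

open Finset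

theorem Finset.filter_Ico_mul_inter_nonempty_subset_image (I J D : Finset ℕ) (w : ℕ → ℕ) :
    (I ×ˢ J).filter (fun p => (Ico (p.2 * w p.1) ((p.2 + 1) * w p.1) ∩ D).Nonempty) ⊆
      (I ×ˢ D).image fun q => (q.1, q.2 / w q.1) := by
  rintro ⟨i, j⟩ hp
  simp only [mem_filter, mem_product] at hp
  obtain ⟨⟨hi, -⟩, d, hd⟩ := hp
  obtain ⟨⟨hjd, hdj⟩, hdD⟩ := by simpa only [mem_inter, mem_Ico] using hd
  exact mem_image.mpr ⟨(i, d), mem_product.mpr ⟨hi, hdD⟩, by simp [Nat.div_eq_of_lt_le hjd hdj]⟩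

theorem Finset.card_filter_Ico_mul_inter_nonempty_le (I J D : Finset ℕ) (w : ℕ → ℕ) :
    ((I ×ˢ J).filter fun p => (Ico (p.2 * w p.1) ((p.2 + 1) * w p.1) ∩ D).Nonempty).card ≤
      I.card * D.card :=
  calc _ ≤ ((I ×ˢ D).image fun q => (q.1, q.2 / w q.1)).card :=
        card_le_card (filter_Ico_mul_inter_nonempty_subset_image I J D w)
    _ ≤ (I ×ˢ D).card := card_image_le
    _ = I.card * D.card := card_product I D

theorem dyadic_intervals_meeting_card_le_general (n : ℕ)
    (D : Finset ℕ) :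
    ((Finset.range (Nat.clog 2 n + 1) ×ˢ Finset.range n).filter fun p =>
        (Finset.Ico (p.2 * 2 ^ p.1) ((p.2 + 1) * 2 ^ p.1) ∩ D).Nonempty).card ≤
      D.card * (Nat.clog 2 n + 1) := by
  simpa only [card_range, mul_comm] using
    card_filter_Ico_mul_inter_nonempty_le (range (Nat.clog 2 n + 1)) (range n) D (2 ^ ·)

/-- **Test-count bound for binary-splitting group testing (`O(k log n)`).** For `n ≥ 1` and
`D ⊆ range n`, the number of pairs `(i, j)` with `i < Nat.clog 2 n + 1` and `j < n` whose
dyadic interval `Ico (j * 2^i) ((j+1) * 2^i)` meets `D` is at most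
`D.card * (Nat.clog 2 n + 1)`. -/
theorem dyadic_intervals_meeting_card_le (n : ℕ) (hn : 1 ≤ n)
    (D : Finset ℕ) (hD : D ⊆ Finset.range n) :
    ((Finset.range (Nat.clog 2 n + 1) ×ˢ Finset.range n).filter fun p =>
        (Finset.Ico (p.2 * 2 ^ p.1) ((p.2 + 1) * 2 ^ p.1) ∩ D).Nonempty).card ≤
      D.card * (Nat.clog 2 n + 1) :=
  dyadic_intervals_meeting_card_le_general n D
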